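/- Let Ω ⊂ R^n be bounded, F a point (m = 0) or segment (m = 1), r = dist(·, F), and let u be the solution of -Δu = γ with γ the Dirac mass at F (m = 0) or a C^1 line measure on F (m = 1, n = 3). Then u belongs to the Kondratiev space K²_{σ−1}(Ω) for every σ > (n−m)/2 − 1, i.e. Σ_{|α| ≤ 2} ∫_Ω |D^α u|² r^{2(σ−1+|α|)} dx < ∞. -/

import Mathlib

/-!
`u(y) = 1 / (4π‖y‖)` is positively homogeneous of degree `-1` and smooth away from the origin.
Differentiating the scaling identity `u (c • x) = c⁻¹ u x` shows that `D^k u` is homogeneous of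
degree `-1 - k`, so by compactness of the unit sphere `‖D^k u x‖ ≤ C ‖x‖^(-1-k)`. The weighted
integrand is then `O(‖x‖^(2σ - 4))`, which is integrable near `0` in `ℝ³` since `2σ - 4 > -3`.
-/

open MeasureTheory Metric Set Real

section PosHomogeneous

variable {E F : Type*} [NormedAddCommGroup E] [NormedSpace ℝ E] [NormedAddCommGroup F]
  [NormedSpace ℝ F]

def IsPosHomogeneous (g : E → F) (a : ℝ) : Prop :=
  ∀ c : ℝ, 0 < c → ∀ x, g (c • x) = c ^ a • g x

theorem ContinuousMultilinearMap.compContinuousLinearMap_smul_id {k : ℕ}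
    (M : ContinuousMultilinearMap ℝ (fun _ : Fin k => E) F) (c : ℝ) :
    M.compContinuousLinearMap (fun _ => c • ContinuousLinearMap.id ℝ E) = c ^ k • M := by
  ext m
  simp [M.map_smul_univ]

theorem IsPosHomogeneous.norm_iteratedFDeriv_smul {g : E → F} {a : ℝ}
    (hg : IsPosHomogeneous g a) (k : ℕ) {c : ℝ} (hc : 0 < c) (x : E) :
    ‖iteratedFDeriv ℝ k g (c • x)‖ = c ^ (a - k) * ‖iteratedFDeriv ℝ k g x‖ := by
  let scaleE : E ≃L[ℝ] E := ContinuousLinearEquiv.smulLeft (Units.mk0 c hc.ne')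
  let scaleF : F ≃L[ℝ] F := ContinuousLinearEquiv.smulLeft (Units.mk0 (c ^ a) (by positivity))
  have hcomp : g ∘ scaleE = scaleF ∘ g := funext fun y => hg c hc y
  have hright : iteratedFDeriv ℝ k (g ∘ scaleE) x
      = c ^ k • iteratedFDeriv ℝ k g (c • x) := by
    simp only [← iteratedFDerivWithin_univ]
    rw [← preimage_univ (f := scaleE),
      scaleE.iteratedFDerivWithin_comp_right g uniqueDiffOn_univ (mem_univ _)]
    exact ContinuousMultilinearMap.compContinuousLinearMap_smul_id _ c
  have hleft : iteratedFDeriv ℝ k (scaleF ∘ g) x = c ^ a • iteratedFDeriv ℝ k g x := by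
    rw [scaleF.iteratedFDeriv_comp_left]
    ext m
    rfl
  have key := congrArg norm (hright.symm.trans (hcomp ▸ hleft))
  rw [norm_smul, norm_smul, norm_of_nonneg (by positivity), norm_of_nonneg (by positivity)] at key
  rw [rpow_sub hc, rpow_natCast, div_mul_eq_mul_div, eq_div_iff (by positivity), ← key, mul_comm]

theorem IsPosHomogeneous.exists_norm_iteratedFDeriv_le [FiniteDimensional ℝ E] {g : E → F}
    {a : ℝ} (hg : IsPosHomogeneous g a) {k : ℕ} (hsmooth : ∀ x ≠ 0, ContDiffAt ℝ k g x) :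
    ∃ C, ∀ x ≠ 0, ‖iteratedFDeriv ℝ k g x‖ ≤ C * ‖x‖ ^ (a - k) := by
  have hcont : ContinuousOn (iteratedFDeriv ℝ k g) (sphere 0 1) := fun y hy =>
    ((hsmooth y (ne_zero_of_mem_unit_sphere ⟨y, hy⟩)).continuousAt_iteratedFDeriv
      le_rfl).continuousWithinAt
  obtain ⟨C, hC⟩ := (isCompact_sphere (0 : E) 1).exists_bound_of_continuousOn hcont
  refine ⟨C, fun x hx => ?_⟩
  have hr : 0 < ‖x‖ := norm_pos_iff.2 hx
  have hunit : ‖x‖⁻¹ • x ∈ sphere (0 : E) 1 := by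
    rw [mem_sphere_zero_iff_norm, norm_smul, norm_inv, norm_norm, inv_mul_cancel₀ hr.ne']
  calc ‖iteratedFDeriv ℝ k g x‖
      = ‖iteratedFDeriv ℝ k g (‖x‖ • ‖x‖⁻¹ • x)‖ := by rw [smul_inv_smul₀ hr.ne']
    _ = ‖x‖ ^ (a - k) * ‖iteratedFDeriv ℝ k g (‖x‖⁻¹ • x)‖ := hg.norm_iteratedFDeriv_smul k hr _
    _ ≤ ‖x‖ ^ (a - k) * C := by gcongr; exact hC _ hunit
    _ = C * ‖x‖ ^ (a - k) := mul_comm _ _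

theorem IsPosHomogeneous.integrableOn_ball_sq_norm_iteratedFDeriv_mul_rpow
    [FiniteDimensional ℝ E] [MeasurableSpace E] [BorelSpace E] {μ : Measure E} [μ.IsAddHaarMeasure]
    (hdim : 1 ≤ Module.finrank ℝ E) {g : E → F} {a b : ℝ} (hg : IsPosHomogeneous g a) {k : ℕ}
    (hsmooth : ∀ x ≠ 0, ContDiffAt ℝ k g x) (hab : -(2 * (a + b)) < Module.finrank ℝ E) (r : ℝ) :
    IntegrableOn (fun x => ‖iteratedFDeriv ℝ k g x‖ ^ 2 * ‖x‖ ^ (2 * (b + k))) (ball 0 r) μ := by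
  obtain ⟨C, hC⟩ := hg.exists_norm_iteratedFDeriv_le hsmooth
  have : Nontrivial E := Module.nontrivial_of_finrank_pos hdim
  have hae : ∀ᵐ x ∂μ, x ≠ 0 := by simp [ae_iff]
  refine integrableOn_ball_of_norm_le_rpow hdim hab (C := C ^ 2) (ae_restrict_of_ae ?_) ?_
  · filter_upwards [hae] with x hx
    have hr : 0 < ‖x‖ := norm_pos_iff.2 hx
    calc ‖‖iteratedFDeriv ℝ k g x‖ ^ 2 * ‖x‖ ^ (2 * (b + k))‖
        = ‖iteratedFDeriv ℝ k g x‖ ^ 2 * ‖x‖ ^ (2 * (b + k)) :=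
          norm_of_nonneg (by positivity)
      _ ≤ (C * ‖x‖ ^ (a - k)) ^ 2 * ‖x‖ ^ (2 * (b + k)) := by gcongr; exact hC x hx
      _ = C ^ 2 * ‖x‖ ^ (-(-(2 * (a + b)))) := by
          rw [mul_pow, mul_assoc, ← rpow_mul_natCast hr.le, ← rpow_add hr]
          ring_nf
  · rw [← restrict_compl_singleton (μ := μ) 0]
    refine ContinuousOn.aestronglyMeasurable (fun x hx => ?_) (measurableSet_singleton 0).compl
    have hx : x ≠ 0 := hx
    exact ((((hsmooth x hx).continuousAt_iteratedFDeriv le_rfl).norm.pow 2).mul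
      (continuous_norm.continuousAt.rpow_const (Or.inl (norm_ne_zero_iff.2 hx)))).continuousWithinAt

-- At `y = 0` both sides are `0` by the convention `1 / 0 = 0`.
theorem isPosHomogeneous_one_div_const_mul_norm (c : ℝ) :
    IsPosHomogeneous (fun y : E => 1 / (c * ‖y‖)) (-1) := by
  intro t ht y
  simp only [norm_smul, norm_of_nonneg ht.le, rpow_neg_one, smul_eq_mul]
  field_simp

end PosHomogeneous

theorem contDiffAt_one_div_const_mul_norm {E : Type*} [NormedAddCommGroup E]
    [InnerProductSpace ℝ E] {c : ℝ} (hc : c ≠ 0) {x : E} (hx : x ≠ 0) (n : WithTop ℕ∞) :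
    ContDiffAt ℝ n (fun y : E => 1 / (c * ‖y‖)) x :=
  contDiffAt_const.div (contDiffAt_const.mul (contDiffAt_norm ℝ hx))
    (mul_ne_zero hc (norm_ne_zero_iff.2 hx))

/-- point-singularity case, `n = 3`, `m = 0`: the solution
`u(x) = 1/(4π‖x‖)` of `-Δu = δ₀` belongs to the Kondratiev space
`K²_{σ-1}(B(0,1))` for every `σ > (n-m)/2 - 1 = 1/2`, i.e.
`∫_{B(0,1)} |D^α u|² ‖x‖^{2(σ-1+|α|)} dx < ∞` for all `|α| ≤ 2`. -/
theorem stmt_14 (σ : ℝ) (hσ : σ > ((3 : ℝ) - 0) / 2 - 1) :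
    ∀ k : ℕ, k ≤ 2 →
      IntegrableOn
        (fun x : EuclideanSpace ℝ (Fin 3) =>
          ‖iteratedFDeriv ℝ k (fun y : EuclideanSpace ℝ (Fin 3) => 1 / (4 * π * ‖y‖)) x‖ ^ 2 *
            ‖x‖ ^ (2 * (σ - 1 + k)))
        (Metric.ball 0 1) volume := by
  intro k _
  have hu := isPosHomogeneous_one_div_const_mul_norm (E := EuclideanSpace ℝ (Fin 3)) (4 * π)
  have hweight : -(2 * (-1 + (σ - 1))) < Module.finrank ℝ (EuclideanSpace ℝ (Fin 3)) := by
    rw [finrank_euclideanSpace_fin]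
    norm_num at hσ ⊢
    linarith
  exact hu.integrableOn_ball_sq_norm_iteratedFDeriv_mul_rpow (by simp)
    (fun x hx => contDiffAt_one_div_const_mul_norm (by positivity) hx k) hweight 1
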